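/- Euler–Lagrange conditions for the relaxed problem: let h_ε minimize Iᶜ_ε over {h : 0 ≤ h ≤ h̄} and suppose h_ε = h̄ χ_{W_ε} for a measurable set W_ε ⊆ supp(h̄). Define u_ε = (1/ε)(⟨h_ε⟩_x − f) and v_ε = (1/ε)(⟨h_ε⟩_y − g). Then c + u_ε + v_ε ≤ 0 a.e. on W_ε ∩ {h̄ > 0}, and c + u_ε + v_ε ≥ 0 a.e. on (supp(h̄) \ W_ε) ∩ {h̄ > 0}. -/

import Mathlib

/-!
Perturb the minimizer `hε` to `hε + t 1_A (y - hε)` with `t ∈ (0, 1]`, `A` measurable, and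
`y = 0` (inner perturbation) or `y = h̄` (outer perturbation); these stay between `0` and `h̄`.
All perturbations are bounded and supported in the compact rectangle `π₁(supp h̄) × π₂(supp h̄)`,
so every term of `Iᶜ_ε` is finite and, `Iᶜ_ε` being quadratic,
`Iᶜ_ε(hε + t k) = Iᶜ_ε(hε) + t ∫ (c + uε + vε) k + O(t²)`: by Fubini the cross terms of the two
penalties are `∫ uε ⟨k⟩_x = ∬ uε k` and `∫ vε ⟨k⟩_y = ∬ vε k`. Minimality thus gives
`∫_A (c + uε + vε)(y - hε) ≥ 0` for all `A`, i.e. `(c + uε + vε)(y - hε) ≥ 0` a.e.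
On `Wε ∩ {h̄ > 0}` the inner choice has `y - hε = -h̄ < 0`; off `Wε` the outer one has
`y - hε = h̄ > 0`.
-/

open MeasureTheory

/-- The relaxed (penalized) transport cost
`Iᶜ_ε(h) = ∬ c h + (1/(2ε))‖⟨h⟩ₓ − f‖²_{L²} + (1/(2ε))‖⟨h⟩_y − g‖²_{L²}`. -/
noncomputable def relaxedCost (m n : ℕ) (ε : ℝ)
    (c : (Fin m → ℝ) × (Fin n → ℝ) → ℝ)
    (f : (Fin m → ℝ) → ℝ) (g : (Fin n → ℝ) → ℝ)
    (h : (Fin m → ℝ) × (Fin n → ℝ) → ℝ) : ℝ :=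
  (∫ p, c p * h p)
    + (1 / (2 * ε)) * (∫ x, ((∫ y, h (x, y)) - f x) ^ 2)
    + (1 / (2 * ε)) * (∫ y, ((∫ x, h (x, y)) - g y) ^ 2)

open Set Function Filter Topology

theorem nonneg_of_forall_le_add_mul_add_sq_mul {F : ℝ → ℝ} {a L Q : ℝ}
    (hF : ∀ t, F t = a + t * L + t ^ 2 * Q) (hmin : ∀ t ∈ Ioc (0 : ℝ) 1, a ≤ F t) : 0 ≤ L := by
  have hlim : Tendsto (fun t => L + t * Q) (𝓝[>] 0) (𝓝 L) := by
    have : Tendsto (fun t : ℝ => L + t * Q) (𝓝 0) (𝓝 (L + 0 * Q)) :=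
      (tendsto_id.mul_const Q).const_add L
    simpa using this.mono_left nhdsWithin_le_nhds
  refine ge_of_tendsto hlim ?_
  filter_upwards [Ioc_mem_nhdsGT one_pos] with t ht
  have hFt := hmin t ht
  rw [hF t] at hFt
  exact nonneg_of_mul_nonneg_right
    (by linarith [show t * (L + t * Q) = t * L + t ^ 2 * Q by ring]) ht.1

theorem add_mul_indicator_sub_mem {ι : Type*} {s : ι → Set ℝ} (hs : ∀ p, Convex ℝ (s p))
    {a b : ι → ℝ} (ha : ∀ p, a p ∈ s p) (hb : ∀ p, b p ∈ s p) (A : Set ι) {t : ℝ}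
    (ht : t ∈ Icc (0 : ℝ) 1) (p : ι) :
    a p + t * A.indicator (fun q => b q - a q) p ∈ s p := by
  by_cases hp : p ∈ A
  · rw [indicator_of_mem hp]
    exact (hs p).add_smul_sub_mem (ha p) (hb p) ht
  · rw [indicator_of_notMem hp, mul_zero, add_zero]
    exact ha p

section Integral

variable {γ : Type*} [MeasurableSpace γ] {μ : Measure γ}

theorem integral_add_mul_sq {A B : γ → ℝ} (hA : Integrable (fun a => A a ^ 2) μ)
    (hAB : Integrable (fun a => A a * B a) μ) (hB : Integrable (fun a => B a ^ 2) μ) (t : ℝ) :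
    ∫ a, (A a + t * B a) ^ 2 ∂μ
      = ∫ a, A a ^ 2 ∂μ + t * (2 * ∫ a, A a * B a ∂μ) + t ^ 2 * ∫ a, B a ^ 2 ∂μ := by
  have hexp : (fun a => (A a + t * B a) ^ 2)
      = fun a => (A a ^ 2 + t * (2 * (A a * B a))) + t ^ 2 * B a ^ 2 := by
    ext a; ring
  have hAB' : Integrable (fun a => t * (2 * (A a * B a))) μ := (hAB.const_mul 2).const_mul t
  rw [hexp, integral_add (hA.fun_add hAB') (hB.const_mul _), integral_add hA hAB',
    integral_const_mul, integral_const_mul, integral_const_mul]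

theorem integrable_of_abs_le_indicator {s : Set γ} (hs : MeasurableSet s) (hμs : μ s ≠ ⊤)
    {f : γ → ℝ} (hf : AEStronglyMeasurable f μ) {C : ℝ}
    (hfC : ∀ a, |f a| ≤ s.indicator (fun _ => C) a) : Integrable f μ :=
  ((integrable_indicator_iff hs).2 (integrableOn_const hμs)).mono' hf (ae_of_all _ hfC)

end Integral

section RectBounded

variable {α β : Type*} [MeasureSpace α] [MeasureSpace β]

structure IsRectBounded (k : α × β → ℝ) (S : Set α) (T : Set β) (C : ℝ) : Prop where
  measurableSet_left : MeasurableSet S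
  measurableSet_right : MeasurableSet T
  measure_left_ne_top : volume S ≠ ⊤
  measure_right_ne_top : volume T ≠ ⊤
  measurable : Measurable k
  abs_le : ∀ p, |k p| ≤ C
  support_subset : support k ⊆ S ×ˢ T

theorem HasCompactSupport.isRectBounded [TopologicalSpace α] [TopologicalSpace β]
    [T2Space α] [T2Space β] [OpensMeasurableSpace α] [OpensMeasurableSpace β]
    [IsFiniteMeasureOnCompacts (volume : Measure α)]
    [IsFiniteMeasureOnCompacts (volume : Measure β)]
    {k : α × β → ℝ} (hk : HasCompactSupport k) (hkm : Measurable k) {C : ℝ}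
    (hkC : ∀ p, |k p| ≤ C) :
    IsRectBounded k (Prod.fst '' tsupport k) (Prod.snd '' tsupport k) C where
  measurableSet_left := (hk.image continuous_fst).measurableSet
  measurableSet_right := (hk.image continuous_snd).measurableSet
  measure_left_ne_top := (hk.image continuous_fst).measure_lt_top.ne
  measure_right_ne_top := (hk.image continuous_snd).measure_lt_top.ne
  measurable := hkm
  abs_le := hkC
  support_subset := (subset_tsupport k).trans subset_fst_image_prod_snd_image

namespace IsRectBounded

variable {S : Set α} {T : Set β} {C C' : ℝ} {c h k : α × β → ℝ} {f u : α → ℝ} {v : β → ℝ}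

theorem mono (hk : IsRectBounded k S T C) {j : α × β → ℝ} (hj : Measurable j)
    (hjk : ∀ p, |j p| ≤ |k p|) : IsRectBounded j S T C :=
  { hk with
    measurable := hj
    abs_le := fun p => (hjk p).trans (hk.abs_le p)
    support_subset := fun p hp =>
      hk.support_subset (abs_pos.1 ((abs_pos.2 hp).trans_le (hjk p))) }

theorem indicator (hk : IsRectBounded k S T C) {A : Set (α × β)} (hA : MeasurableSet A) :
    IsRectBounded (A.indicator k) S T C :=
  hk.mono (hk.measurable.indicator hA) fun p => norm_indicator_le_norm_self k p

theorem swap (hk : IsRectBounded k S T C) :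
    IsRectBounded (fun q : β × α => k q.swap) T S C where
  measurableSet_left := hk.measurableSet_right
  measurableSet_right := hk.measurableSet_left
  measure_left_ne_top := hk.measure_right_ne_top
  measure_right_ne_top := hk.measure_left_ne_top
  measurable := hk.measurable.comp measurable_swap
  abs_le q := hk.abs_le q.swap
  support_subset _ hq := (hk.support_subset hq).symm

theorem abs_le_indicator (hk : IsRectBounded k S T C) (p : α × β) :
    |k p| ≤ (S ×ˢ T).indicator (fun _ => C) p := by
  by_cases hp : p ∈ S ×ˢ T
  · rw [indicator_of_mem hp]
    exact hk.abs_le p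
  · rw [indicator_of_notMem hp, notMem_support.1 fun h => hp (hk.support_subset h), abs_zero]

theorem abs_le_indicator_snd (hk : IsRectBounded k S T C) (x : α) (y : β) :
    |k (x, y)| ≤ T.indicator (fun _ => C) y := by
  by_cases hy : y ∈ T
  · rw [indicator_of_mem hy]
    exact hk.abs_le _
  · rw [indicator_of_notMem hy, notMem_support.1 fun h => hy (hk.support_subset h).2, abs_zero]

theorem integrable_slice (hk : IsRectBounded k S T C) (x : α) :
    Integrable fun y => k (x, y) :=
  integrable_of_abs_le_indicator hk.measurableSet_right hk.measure_right_ne_top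
    (hk.measurable.comp measurable_prodMk_left).aestronglyMeasurable (hk.abs_le_indicator_snd x)

theorem abs_integral_slice_le (hk : IsRectBounded k S T C) (x : α) :
    |∫ y, k (x, y)| ≤ volume.real T * C := by
  rw [← smul_eq_mul, ← integral_indicator_const _ hk.measurableSet_right]
  exact norm_integral_le_of_norm_le
    ((integrable_indicator_iff hk.measurableSet_right).2
      (integrableOn_const hk.measure_right_ne_top))
    (f := fun y => k (x, y)) (ae_of_all _ (hk.abs_le_indicator_snd x))

theorem integrable_mul_fst (hk : IsRectBounded k S T C) (hu : Integrable u) :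
    Integrable fun p : α × β => u p.1 * k p := by
  refine (hu.norm.mul_prod ((integrable_indicator_iff hk.measurableSet_right).2
    (integrableOn_const hk.measure_right_ne_top (C := C)))).mono'
    (hu.1.comp_fst.mul hk.measurable.aestronglyMeasurable) (ae_of_all _ fun p => ?_)
  rw [norm_mul]
  exact mul_le_mul_of_nonneg_left (hk.abs_le_indicator_snd p.1 p.2) (norm_nonneg _)

theorem integrable_mul (hk : IsRectBounded k S T C) (hc : IntegrableOn c (S ×ˢ T)) :
    Integrable fun p => c p * k p := by
  rw [← integrableOn_iff_integrable_of_support_subset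
    ((support_mul_subset_right c k).trans hk.support_subset)]
  exact hc.mul_bdd hk.measurable.aestronglyMeasurable.restrict (ae_of_all _ hk.abs_le)

variable [SFinite (volume : Measure β)]

theorem integrable (hk : IsRectBounded k S T C) : Integrable k := by
  refine integrable_of_abs_le_indicator (hk.measurableSet_left.prod hk.measurableSet_right) ?_
    hk.measurable.aestronglyMeasurable hk.abs_le_indicator
  rw [Measure.volume_eq_prod, Measure.prod_prod]
  exact ENNReal.mul_ne_top hk.measure_left_ne_top hk.measure_right_ne_top

theorem integrable_integral_slice (hk : IsRectBounded k S T C) :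
    Integrable fun x => ∫ y, k (x, y) :=
  hk.integrable.integral_prod_left

theorem integrable_mul_integral_slice (hk : IsRectBounded k S T C) (hu : Integrable u) :
    Integrable fun x => u x * ∫ y, k (x, y) :=
  hu.mul_bdd hk.integrable_integral_slice.1 (ae_of_all _ hk.abs_integral_slice_le)

theorem integrable_sq_integral_slice_sub (hk : IsRectBounded k S T C) (hf : Integrable f)
    (hf2 : Integrable fun x => f x ^ 2) :
    Integrable fun x => ((∫ y, k (x, y)) - f x) ^ 2 :=
  ((hk.integrable_mul_integral_slice (hk.integrable_integral_slice.sub (hf.const_mul 2))).add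
    hf2).congr (ae_of_all _ fun x => by simp only [Pi.add_apply, Pi.sub_apply]; ring)

theorem integrable_of_eq_const_mul_integral_slice_sub (hk : IsRectBounded k S T C)
    (hf : Integrable f) {a : ℝ} (hu : ∀ x, u x = a * ((∫ y, k (x, y)) - f x)) :
    Integrable u :=
  ((hk.integrable_integral_slice.sub hf).const_mul a).congr (ae_of_all _ fun x => (hu x).symm)

theorem integral_sq_integral_slice_add_mul_sub (hh : IsRectBounded h S T C)
    (hk : IsRectBounded k S T C') (hf : Integrable f) (hf2 : Integrable fun x => f x ^ 2)
    (t : ℝ) :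
    ∫ x, ((∫ y, h (x, y) + t * k (x, y)) - f x) ^ 2
      = (∫ x, ((∫ y, h (x, y)) - f x) ^ 2)
        + t * (2 * ∫ x, ((∫ y, h (x, y)) - f x) * ∫ y, k (x, y))
        + t ^ 2 * ∫ x, (∫ y, k (x, y)) ^ 2 := by
  have hslice : ∀ x, ∫ y, h (x, y) + t * k (x, y) = (∫ y, h (x, y)) + t * ∫ y, k (x, y) :=
    fun x => by
      rw [integral_add (hh.integrable_slice x) ((hk.integrable_slice x).const_mul t),
        integral_const_mul]
  have hsq : ∀ x, ((∫ y, h (x, y) + t * k (x, y)) - f x) ^ 2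
      = ((∫ y, h (x, y)) - f x + t * ∫ y, k (x, y)) ^ 2 := fun x => by rw [hslice]; ring
  simp_rw [hsq]
  exact integral_add_mul_sq (hh.integrable_sq_integral_slice_sub hf hf2)
    (hk.integrable_mul_integral_slice (hh.integrable_integral_slice.sub hf))
    ((hk.integrable_mul_integral_slice hk.integrable_integral_slice).congr
      (ae_of_all _ fun x => (sq _).symm)) t

variable [SFinite (volume : Measure α)]

theorem integrable_mul_snd (hk : IsRectBounded k S T C) (hv : Integrable v) :
    Integrable fun p : α × β => v p.2 * k p :=
  (hk.swap.integrable_mul_fst hv).swap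

theorem integral_mul_fst (hk : IsRectBounded k S T C) (hu : Integrable u) :
    ∫ p : α × β, u p.1 * k p = ∫ x, u x * ∫ y, k (x, y) := by
  rw [Measure.volume_eq_prod, integral_prod _ (hk.integrable_mul_fst hu)]
  simp only [integral_const_mul]

theorem integral_mul_snd (hk : IsRectBounded k S T C) (hv : Integrable v) :
    ∫ p : α × β, v p.2 * k p = ∫ y, v y * ∫ x, k (x, y) := by
  rw [Measure.volume_eq_prod, ← integral_prod_swap, ← Measure.volume_eq_prod]
  exact hk.swap.integral_mul_fst hv

theorem integrable_potential_mul (hk : IsRectBounded k S T C) (hc : IntegrableOn c (S ×ˢ T))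
    (hu : Integrable u) (hv : Integrable v) :
    Integrable fun p => (c p + u p.1 + v p.2) * k p :=
  (((hk.integrable_mul hc).fun_add (hk.integrable_mul_fst hu)).fun_add
    (hk.integrable_mul_snd hv)).congr (ae_of_all _ fun p => by ring)

theorem integral_potential_mul (hk : IsRectBounded k S T C) (hc : IntegrableOn c (S ×ˢ T))
    (hu : Integrable u) (hv : Integrable v) :
    ∫ p, (c p + u p.1 + v p.2) * k p
      = (∫ p, c p * k p) + (∫ x, u x * ∫ y, k (x, y)) + ∫ y, v y * ∫ x, k (x, y) := by
  simp_rw [add_mul]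
  rw [integral_add ((hk.integrable_mul hc).fun_add (hk.integrable_mul_fst hu))
      (hk.integrable_mul_snd hv), integral_add (hk.integrable_mul hc) (hk.integrable_mul_fst hu),
    hk.integral_mul_fst hu, hk.integral_mul_snd hv]

end IsRectBounded

end RectBounded

section RelaxedCost

variable {m n : ℕ} {ε : ℝ} {c h k w : (Fin m → ℝ) × (Fin n → ℝ) → ℝ}
  {f u : (Fin m → ℝ) → ℝ} {g v : (Fin n → ℝ) → ℝ} {S : Set (Fin m → ℝ)} {T : Set (Fin n → ℝ)}
  {C C' : ℝ}

theorem relaxedCost_add_mul (hh : IsRectBounded h S T C) (hk : IsRectBounded k S T C')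
    (hc : IntegrableOn c (S ×ˢ T)) (hf : Integrable f) (hf2 : Integrable fun x => f x ^ 2)
    (hg : Integrable g) (hg2 : Integrable fun y => g y ^ 2)
    (hu : ∀ x, u x = 1 / ε * ((∫ y, h (x, y)) - f x))
    (hv : ∀ y, v y = 1 / ε * ((∫ x, h (x, y)) - g y)) (t : ℝ) :
    relaxedCost m n ε c f g (fun p => h p + t * k p)
      = relaxedCost m n ε c f g h + t * (∫ p, (c p + u p.1 + v p.2) * k p)
        + t ^ 2 * (1 / (2 * ε) * ((∫ x, (∫ y, k (x, y)) ^ 2) + ∫ y, (∫ x, k (x, y)) ^ 2)) := by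
  have hcost : ∫ p, c p * (h p + t * k p) = (∫ p, c p * h p) + t * ∫ p, c p * k p := by
    simp_rw [mul_add, mul_left_comm (c _) t]
    rw [integral_add (hh.integrable_mul hc) ((hk.integrable_mul hc).const_mul t),
      integral_const_mul]
  have hpen_y := hh.swap.integral_sq_integral_slice_add_mul_sub hk.swap hg hg2 t
  simp only [Prod.swap_prod_mk] at hpen_y
  have hux : ∫ x, u x * ∫ y, k (x, y)
      = 1 / ε * ∫ x, ((∫ y, h (x, y)) - f x) * ∫ y, k (x, y) := by
    simp_rw [hu, mul_assoc]
    exact integral_const_mul _ _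
  have hvy : ∫ y, v y * ∫ x, k (x, y)
      = 1 / ε * ∫ y, ((∫ x, h (x, y)) - g y) * ∫ x, k (x, y) := by
    simp_rw [hv, mul_assoc]
    exact integral_const_mul _ _
  rw [hk.integral_potential_mul hc (hh.integrable_of_eq_const_mul_integral_slice_sub hf hu)
      (hh.swap.integrable_of_eq_const_mul_integral_slice_sub hg hv), hux, hvy,
    relaxedCost, relaxedCost, hcost, hh.integral_sq_integral_slice_add_mul_sub hk hf hf2 t,
    hpen_y]
  ring

theorem integral_potential_mul_nonneg (hh : IsRectBounded h S T C)
    (hk : IsRectBounded k S T C') (hc : IntegrableOn c (S ×ˢ T)) (hf : Integrable f)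
    (hf2 : Integrable fun x => f x ^ 2) (hg : Integrable g) (hg2 : Integrable fun y => g y ^ 2)
    (hu : ∀ x, u x = 1 / ε * ((∫ y, h (x, y)) - f x))
    (hv : ∀ y, v y = 1 / ε * ((∫ x, h (x, y)) - g y))
    (hmin : ∀ t ∈ Ioc (0 : ℝ) 1,
      relaxedCost m n ε c f g h ≤ relaxedCost m n ε c f g (fun p => h p + t * k p)) :
    0 ≤ ∫ p, (c p + u p.1 + v p.2) * k p :=
  nonneg_of_forall_le_add_mul_add_sq_mul (relaxedCost_add_mul hh hk hc hf hf2 hg hg2 hu hv) hmin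

theorem ae_nonneg_potential_mul (hh : IsRectBounded h S T C) (hw : IsRectBounded w S T C')
    (hc : IntegrableOn c (S ×ˢ T)) (hf : Integrable f) (hf2 : Integrable fun x => f x ^ 2)
    (hg : Integrable g) (hg2 : Integrable fun y => g y ^ 2)
    (hu : ∀ x, u x = 1 / ε * ((∫ y, h (x, y)) - f x))
    (hv : ∀ y, v y = 1 / ε * ((∫ x, h (x, y)) - g y))
    (hmin : ∀ A, MeasurableSet A → ∀ t ∈ Ioc (0 : ℝ) 1,
      relaxedCost m n ε c f g h ≤ relaxedCost m n ε c f g (fun p => h p + t * A.indicator w p)) :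
    0 ≤ᵐ[volume] fun p => (c p + u p.1 + v p.2) * w p := by
  refine ae_nonneg_of_forall_setIntegral_nonneg
    (hw.integrable_potential_mul hc (hh.integrable_of_eq_const_mul_integral_slice_sub hf hu)
      (hh.swap.integrable_of_eq_const_mul_integral_slice_sub hg hv)) fun A hA _ => ?_
  rw [← integral_indicator hA]
  simp_rw [indicator_mul_right]
  exact integral_potential_mul_nonneg hh (hw.indicator hA) hc hf hf2 hg hg2 hu hv (hmin A hA)

theorem ae_nonneg_potential_mul_sub {hbar y : (Fin m → ℝ) × (Fin n → ℝ) → ℝ}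
    (hbarR : IsRectBounded hbar S T C) (hh : Measurable h) (hh_mem : ∀ p, h p ∈ Icc 0 (hbar p))
    (hy : Measurable y) (hy_mem : ∀ p, y p ∈ Icc 0 (hbar p)) (hc : IntegrableOn c (S ×ˢ T))
    (hf : Integrable f) (hf2 : Integrable fun x => f x ^ 2) (hg : Integrable g)
    (hg2 : Integrable fun y => g y ^ 2) (hu : ∀ x, u x = 1 / ε * ((∫ y, h (x, y)) - f x))
    (hv : ∀ y, v y = 1 / ε * ((∫ x, h (x, y)) - g y))
    (hmin : ∀ h' : (Fin m → ℝ) × (Fin n → ℝ) → ℝ, Measurable h' →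
      (∀ᵐ p, 0 ≤ h' p ∧ h' p ≤ hbar p) → relaxedCost m n ε c f g h ≤ relaxedCost m n ε c f g h') :
    0 ≤ᵐ[volume] fun p => (c p + u p.1 + v p.2) * (y p - h p) := by
  refine ae_nonneg_potential_mul
    (hbarR.mono hh fun p => abs_le_abs_of_nonneg (hh_mem p).1 (hh_mem p).2)
    (hbarR.mono (hy.sub hh) fun p => (abs_sub_le_of_nonneg_of_le (hy_mem p).1 (hy_mem p).2
      (hh_mem p).1 (hh_mem p).2).trans (le_abs_self _)) hc hf hf2 hg hg2 hu hv
    fun A hA t ht => hmin _ (hh.add (((hy.sub hh).indicator hA).const_mul t)) (ae_of_all _ ?_)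
  exact add_mul_indicator_sub_mem (fun p => convex_Icc 0 (hbar p)) hh_mem hy_mem A
    (Ioc_subset_Icc_self ht)

end RelaxedCost

/-- Euler–Lagrange conditions for the relaxed problem: if
`h_ε = h̄ χ_{W_ε}` minimizes `Iᶜ_ε` over `{h : 0 ≤ h ≤ h̄}`, and
`u_ε = (1/ε)(⟨h_ε⟩ₓ − f)`, `v_ε = (1/ε)(⟨h_ε⟩_y − g)`, then
`c + u_ε + v_ε ≤ 0` a.e. on `W_ε ∩ {h̄ > 0}` and `c + u_ε + v_ε ≥ 0` a.e. on
`(supp h̄ \ W_ε) ∩ {h̄ > 0}`. -/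
theorem relaxed_euler_lagrange (m n : ℕ) (ε : ℝ) (hε : 0 < ε)
    (hbar c : (Fin m → ℝ) × (Fin n → ℝ) → ℝ)
    (f : (Fin m → ℝ) → ℝ) (g : (Fin n → ℝ) → ℝ)
    (hbar_meas : Measurable hbar) (hbar_nonneg : ∀ p, 0 ≤ hbar p)
    (hbar_bdd : ∃ C, ∀ p, hbar p ≤ C) (hbar_supp : HasCompactSupport hbar)
    (f_meas : Measurable f)
    (f_int : Integrable f)
    (f_sq_int : Integrable (fun x => (f x) ^ 2))
    (g_meas : Measurable g)
    (g_int : Integrable g)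
    (g_sq_int : Integrable (fun y => (g y) ^ 2))
    (c_locint : LocallyIntegrable c)
    (Wε : Set ((Fin m → ℝ) × (Fin n → ℝ))) (Wε_meas : MeasurableSet Wε)
    (hε : (Fin m → ℝ) × (Fin n → ℝ) → ℝ)
    (hε_def : hε = Wε.indicator hbar)
    (hε_min : ∀ h : (Fin m → ℝ) × (Fin n → ℝ) → ℝ, Measurable h →
      (∀ᵐ p, 0 ≤ h p ∧ h p ≤ hbar p) →
      relaxedCost m n ε c f g hε ≤ relaxedCost m n ε c f g h)
    (uε : (Fin m → ℝ) → ℝ) (vε : (Fin n → ℝ) → ℝ)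
    (uε_def : ∀ x, uε x = (1 / ε) * ((∫ y, hε (x, y)) - f x))
    (vε_def : ∀ y, vε y = (1 / ε) * ((∫ x, hε (x, y)) - g y)) :
    (∀ᵐ p : (Fin m → ℝ) × (Fin n → ℝ),
        p ∈ Wε → 0 < hbar p → c p + uε p.1 + vε p.2 ≤ 0) ∧
      (∀ᵐ p : (Fin m → ℝ) × (Fin n → ℝ),
        p ∈ tsupport hbar \ Wε → 0 < hbar p → 0 ≤ c p + uε p.1 + vε p.2) := by
  obtain ⟨C, hC⟩ := hbar_bdd
  have hbarR := hbar_supp.isRectBounded hbar_meas fun p =>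
    (abs_of_nonneg (hbar_nonneg p)).trans_le (hC p)
  have hc := c_locint.integrableOn_isCompact
    ((hbar_supp.image continuous_fst).prod (hbar_supp.image continuous_snd))
  have hε_meas : Measurable hε := hε_def ▸ hbar_meas.indicator Wε_meas
  have hε_mem : ∀ p, hε p ∈ Icc 0 (hbar p) := fun p => by
    rw [hε_def]
    exact ⟨indicator_nonneg (fun q _ => hbar_nonneg q) p,
      indicator_le_self' (fun q _ => hbar_nonneg q) p⟩
  have hvar : ∀ y, Measurable y → (∀ p, y p ∈ Icc 0 (hbar p)) →
      0 ≤ᵐ[volume] fun p => (c p + uε p.1 + vε p.2) * (y p - hε p) := fun y hy hy_mem =>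
    ae_nonneg_potential_mul_sub hbarR hε_meas hε_mem hy hy_mem hc f_int f_sq_int g_int g_sq_int
      uε_def vε_def hε_min
  constructor
  · filter_upwards [hvar 0 measurable_const fun p => ⟨le_rfl, hbar_nonneg p⟩] with p hp hW hpos
    rw [hε_def, indicator_of_mem hW, Pi.zero_apply, zero_sub, mul_neg, neg_nonneg] at hp
    exact nonpos_of_mul_nonpos_left hp hpos
  · filter_upwards [hvar hbar hbar_meas fun p => ⟨hbar_nonneg p, le_rfl⟩] with p hp hW hpos
    rw [hε_def, indicator_of_notMem hW.2, sub_zero] at hp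
    exact nonneg_of_mul_nonneg_left hp hpos
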